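/- arXiv:1501.02414 — 2 statements merged into one kernel-verified Lean document; each statement's English description precedes it below -/
import Mathlib

section
/- Let χ ∈ (0,1), θ ∈ (χ,1], η̄ > 0, {η_l} real numbers with 0 ≤ η_l ≤ η̄ l^{-θ}, and A a symmetric positive-definite real d×d matrix. Define F_{j,n} = j^{-χ} ∏_{l=j+1}^{n−1} (I − l^{-χ}A + η_l I) for 1 ≤ j ≤ n−1 (products in decreasing order of index). If {z_j} is a sequence in ℝ^d with |n^{-χ} Σ_{j=1}^n z_j| → 0 as n → ∞, then |Σ_{j=1}^{n−1} F_{j,n} z_j| → 0 as n → ∞. -/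
open Filter Finset
open scoped RealInnerProductSpace Topology

/-- `prodDesc B p q = B_q * B_{q-1} * ⋯ * B_p` (decreasing order of index);
an empty product (`p > q`) is the identity. -/
noncomputable def prodDesc {d : ℕ}
    (B : ℕ → EuclideanSpace ℝ (Fin d) →L[ℝ] EuclideanSpace ℝ (Fin d)) (p q : ℕ) :
    EuclideanSpace ℝ (Fin d) →L[ℝ] EuclideanSpace ℝ (Fin d) :=
  ((List.range (q + 1 - p)).map fun i => B (q - i)).prod

/-!
Put `h n = n ^ (-χ)`, `M l = 1 - h l • A + η l • 1`, `T m = ∑_{j ≤ m} h j • (M_m ⋯ M_{j+1}) (z j)`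
and `ζ m = h m • ∑_{j ≤ m} z j`. Summation by parts turns the recursion
`T (m+1) = M (m+1) (T m) + h (m+1) • z (m+1)` into
`T (m+1) - ζ (m+1) = M (m+1) (T m - ζ m) + (M (m+1) - (h (m+1) / h m) • 1) (ζ m)`.
Coercivity of `A` and `η l = o(h l)` give `‖M l‖ ≤ 1 - c h l` eventually, while the perturbation
operator has norm `O(h (m+1))` because `(m+1)^χ - m^χ ≤ 1`. As `∑ h l = ∞` and `ζ m → 0`, the
contraction wins and `T m - ζ m → 0`, hence `T m → 0`.
-/

section prodDesc

variable {d : ℕ} (B : ℕ → EuclideanSpace ℝ (Fin d) →L[ℝ] EuclideanSpace ℝ (Fin d))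

theorem prodDesc_succ_self (q : ℕ) : prodDesc B (q + 1) q = 1 := by
  simp [prodDesc]

theorem prodDesc_succ {p q : ℕ} (h : p ≤ q + 1) :
    prodDesc B p (q + 1) = B (q + 1) * prodDesc B p q := by
  unfold prodDesc
  rw [show q + 1 + 1 - p = q + 1 - p + 1 by omega, List.range_succ_eq_map]
  simp only [List.map_cons, List.prod_cons, List.map_map]
  congr 2
  refine List.map_congr_left fun i _ => ?_
  simp only [Function.comp_apply]
  congr 1
  omega

variable (c : ℕ → ℝ) (z : ℕ → EuclideanSpace ℝ (Fin d))

theorem sum_smul_prodDesc_succ (m : ℕ) :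
    ∑ j ∈ Icc 1 (m + 1), c j • prodDesc B (j + 1) (m + 1) (z j) =
      B (m + 1) (∑ j ∈ Icc 1 m, c j • prodDesc B (j + 1) m (z j)) + c (m + 1) • z (m + 1) := by
  rw [sum_Icc_succ_top (by omega), prodDesc_succ_self, map_sum]
  congr 1
  refine sum_congr rfl fun j hj => ?_
  rw [prodDesc_succ B (by simp at hj; omega), mul_apply_eq_comp, map_smul]

theorem sum_smul_prodDesc_sub_smul_sum_succ {m : ℕ} (hc : c m ≠ 0) :
    ∑ j ∈ Icc 1 (m + 1), c j • prodDesc B (j + 1) (m + 1) (z j)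
        - c (m + 1) • ∑ j ∈ Icc 1 (m + 1), z j =
      B (m + 1) (∑ j ∈ Icc 1 m, c j • prodDesc B (j + 1) m (z j) - c m • ∑ j ∈ Icc 1 m, z j) +
        (B (m + 1) - (c (m + 1) / c m) • 1) (c m • ∑ j ∈ Icc 1 m, z j) := by
  rw [sum_smul_prodDesc_succ, sum_Icc_succ_top (by omega : 1 ≤ m + 1)]
  simp only [map_sub, sub_apply, smul_apply, one_apply_eq_self, smul_smul, div_mul_cancel₀ _ hc,
    smul_add]
  abel

end prodDesc

theorem le_prod_mul_of_le_mul {x a : ℕ → ℝ} {N : ℕ} (ha : ∀ n ≥ N, 0 ≤ a n)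
    (hx : ∀ n ≥ N, x (n + 1) ≤ a n * x n) :
    ∀ n ≥ N, x n ≤ (∏ l ∈ Ico N n, a l) * x N := by
  intro n hn
  induction n, hn using Nat.le_induction with
  | base => simp
  | succ n hn ih =>
    calc x (n + 1) ≤ a n * x n := hx n hn
      _ ≤ a n * ((∏ l ∈ Ico N n, a l) * x N) := mul_le_mul_of_nonneg_left ih (ha n hn)
      _ = (∏ l ∈ Ico N (n + 1), a l) * x N := by rw [prod_Ico_succ_top hn]; ring

theorem tendsto_prod_Ico_one_sub_of_not_summable {ρ : ℕ → ℝ} {N : ℕ} (hρ0 : ∀ n, 0 ≤ ρ n)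
    (hρ1 : ∀ n ≥ N, ρ n ≤ 1) (hρ : ¬ Summable ρ) :
    Tendsto (fun n => ∏ l ∈ Ico N n, (1 - ρ l)) atTop (𝓝 0) := by
  have hsum : Tendsto (fun n => ∑ l ∈ Ico N n, ρ l) atTop atTop := by
    have := tendsto_atTop_add_const_right atTop (-∑ l ∈ range N, ρ l)
      ((not_summable_iff_tendsto_nat_atTop_of_nonneg hρ0).1 hρ)
    refine this.congr' ?_
    filter_upwards [eventually_ge_atTop N] with n hn
    rw [sum_Ico_eq_sub _ hn, sub_eq_add_neg]
  refine squeeze_zero' (Eventually.of_forall fun n => prod_nonneg fun l hl => ?_)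
    (Eventually.of_forall fun n => ?_)
    (Real.tendsto_exp_atBot.comp (tendsto_neg_atTop_atBot.comp hsum))
  · linarith [hρ1 l (mem_Ico.1 hl).1]
  · calc ∏ l ∈ Ico N n, (1 - ρ l) ≤ ∏ l ∈ Ico N n, Real.exp (-ρ l) :=
          prod_le_prod (fun l hl => by linarith [hρ1 l (mem_Ico.1 hl).1])
            fun l _ => by linarith [Real.add_one_le_exp (-ρ l)]
      _ = Real.exp (-∑ l ∈ Ico N n, ρ l) := by rw [← Real.exp_sum, sum_neg_distrib]

theorem tendsto_zero_of_le_one_sub_mul_add_mul {v ρ w : ℕ → ℝ} (hv : ∀ n, 0 ≤ v n)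
    (hρ0 : ∀ n, 0 ≤ ρ n) (hρ1 : ∀ᶠ n in atTop, ρ n ≤ 1) (hρ : ¬ Summable ρ)
    (hw : Tendsto w atTop (𝓝 0))
    (hrec : ∀ᶠ n in atTop, v (n + 1) ≤ (1 - ρ n) * v n + ρ n * w n) :
    Tendsto v atTop (𝓝 0) := by
  refine tendsto_order.2 ⟨fun a ha => .of_forall fun n => ha.trans_le (hv n), fun ε hε => ?_⟩
  obtain ⟨N, hN⟩ := eventually_atTop.1
    (hρ1.and (hrec.and (hw.eventually (eventually_le_nhds (half_pos hε)))))
  have hcontr : ∀ n ≥ N, v n - ε / 2 ≤ (∏ l ∈ Ico N n, (1 - ρ l)) * (v N - ε / 2) := by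
    refine le_prod_mul_of_le_mul (x := fun n => v n - ε / 2)
      (fun n hn => by linarith [(hN n hn).1]) fun n hn => ?_
    obtain ⟨-, hrec, hw⟩ := hN n hn
    nlinarith [mul_le_mul_of_nonneg_left hw (hρ0 n)]
  have hprod := (tendsto_prod_Ico_one_sub_of_not_summable hρ0 (fun n hn => (hN n hn).1)
    hρ).mul_const (v N - ε / 2)
  rw [zero_mul] at hprod
  filter_upwards [eventually_ge_atTop N, hprod.eventually (gt_mem_nhds (half_pos hε))]
    with n hn hsmall
  linarith [hcontr n hn]

section NormedSpace

variable {E : Type*} [NormedAddCommGroup E] [NormedSpace ℝ E]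

theorem norm_smul_one_le {a : ℝ} (ha : 0 ≤ a) : ‖a • (1 : E →L[ℝ] E)‖ ≤ a :=
  calc ‖a • (1 : E →L[ℝ] E)‖ = ‖a‖ * ‖(1 : E →L[ℝ] E)‖ := norm_smul _ _
    _ ≤ a * 1 := by
      rw [Real.norm_of_nonneg ha]; exact mul_le_mul_of_nonneg_left ContinuousLinearMap.norm_id_le ha
    _ = a := mul_one a

theorem norm_one_sub_smul_add_smul_sub_smul_le (A : E →L[ℝ] E) {h η a : ℝ} (hh : 0 ≤ h)
    (hη : 0 ≤ η) (ha : a ≤ 1) :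
    ‖1 - h • A + η • 1 - a • 1‖ ≤ (1 - a) + h * ‖A‖ + η := by
  have hrw : (1 : E →L[ℝ] E) - h • A + η • 1 - a • 1 = (1 - a) • 1 - h • A + η • 1 := by
    rw [sub_smul, one_smul]; abel
  rw [hrw]
  calc ‖(1 - a) • (1 : E →L[ℝ] E) - h • A + η • 1‖
      ≤ ‖(1 - a) • (1 : E →L[ℝ] E)‖ + ‖h • A‖ + ‖η • (1 : E →L[ℝ] E)‖ :=
        (norm_add_le _ _).trans (add_le_add_left (norm_sub_le _ _) _)
    _ ≤ (1 - a) + h * ‖A‖ + η := by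
      gcongr
      · exact norm_smul_one_le (by linarith)
      · rw [norm_smul, Real.norm_of_nonneg hh]
      · exact norm_smul_one_le hη

theorem tendsto_zero_of_eq_apply_add_apply
    {U y : ℕ → E} {M R : ℕ → E →L[ℝ] E} {h : ℕ → ℝ} {c K : ℝ} (hc : 0 < c)
    (hh0 : ∀ n, 0 ≤ h n) (hh1 : ∀ᶠ n in atTop, c * h n ≤ 1) (hh : ¬ Summable h)
    (hy : Tendsto y atTop (𝓝 0)) (hM : ∀ᶠ n in atTop, ‖M n‖ ≤ 1 - c * h n)
    (hR : ∀ᶠ n in atTop, ‖R n‖ ≤ K * h n)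
    (hU : ∀ᶠ n in atTop, U (n + 1) = M n (U n) + R n (y n)) : Tendsto U atTop (𝓝 0) := by
  refine tendsto_zero_iff_norm_tendsto_zero.2 (tendsto_zero_of_le_one_sub_mul_add_mul
    (w := fun n => K / c * ‖y n‖) (fun n => norm_nonneg _) (fun n => mul_nonneg hc.le (hh0 n)) hh1
    ((summable_mul_left_iff hc.ne').not.2 hh) (by simpa using hy.norm.const_mul (K / c)) ?_)
  filter_upwards [hM, hR, hU] with n hM hR hU
  calc ‖U (n + 1)‖ ≤ ‖M n‖ * ‖U n‖ + ‖R n‖ * ‖y n‖ :=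
        hU ▸ (norm_add_le _ _).trans (add_le_add ((M n).le_opNorm _) ((R n).le_opNorm _))
    _ ≤ (1 - c * h n) * ‖U n‖ + K * h n * ‖y n‖ := by gcongr
    _ = (1 - c * h n) * ‖U n‖ + c * h n * (K / c * ‖y n‖) := by field_simp

end NormedSpace

section InnerProductSpace

variable {E : Type*} [NormedAddCommGroup E] [InnerProductSpace ℝ E]

theorem exists_pos_mul_norm_sq_le_inner [FiniteDimensional ℝ E] (A : E →L[ℝ] E)
    (hA : ∀ x, x ≠ 0 → 0 < ⟪A x, x⟫) : ∃ lam > 0, ∀ x, lam * ‖x‖ ^ 2 ≤ ⟪A x, x⟫ := by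
  rcases subsingleton_or_nontrivial E with hE | hE
  · exact ⟨1, one_pos, fun x => by simp [Subsingleton.elim x 0]⟩
  obtain ⟨x₀, hx₀, hmin⟩ := (isCompact_sphere (0 : E) 1).exists_isMinOn
    (NormedSpace.sphere_nonempty.2 zero_le_one)
    (A.continuous.inner (𝕜 := ℝ) continuous_id).continuousOn
  have hx₀ : ‖x₀‖ = 1 := by simpa using hx₀
  refine ⟨⟪A x₀, x₀⟫, hA x₀ (norm_ne_zero_iff.1 (by simp [hx₀])), fun x => ?_⟩
  rcases eq_or_ne x 0 with rfl | hx
  · simp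
  have hxn : ‖x‖ ≠ 0 := norm_ne_zero_iff.2 hx
  have hu : ‖‖x‖⁻¹ • x‖ = 1 := by simp [norm_smul, hxn]
  have := hmin (show ‖x‖⁻¹ • x ∈ Metric.sphere (0 : E) 1 by simpa using hu)
  simp only [Set.mem_ofPred_eq, id, map_smul, real_inner_smul_left, real_inner_smul_right] at this
  calc ⟪A x₀, x₀⟫ * ‖x‖ ^ 2 ≤ ‖x‖⁻¹ * (‖x‖⁻¹ * ⟪A x, x⟫) * ‖x‖ ^ 2 := by gcongr
    _ = ⟪A x, x⟫ := by field_simp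

theorem norm_one_sub_smul_le {A : E →L[ℝ] E} {lam h : ℝ} (hA : ∀ x, lam * ‖x‖ ^ 2 ≤ ⟪A x, x⟫)
    (hh : 0 ≤ h) (hhA : h * ‖A‖ ^ 2 ≤ lam) (hlh : lam * h ≤ 1) :
    ‖1 - h • A‖ ≤ 1 - lam / 2 * h := by
  have hbound : 0 ≤ 1 - lam / 2 * h := by nlinarith [sq_nonneg ‖A‖]
  refine ContinuousLinearMap.opNorm_le_bound _ hbound fun x => ?_
  have hAx : ‖A x‖ ^ 2 ≤ ‖A‖ ^ 2 * ‖x‖ ^ 2 := by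
    rw [← mul_pow]; gcongr; exact A.le_opNorm x
  have hsq : ‖x - h • A x‖ ^ 2 ≤ ((1 - lam / 2 * h) * ‖x‖) ^ 2 := by
    rw [norm_sub_sq_real, real_inner_smul_right, norm_smul, Real.norm_of_nonneg hh,
      real_inner_comm]
    nlinarith [mul_le_mul_of_nonneg_left (hA x) hh, mul_le_mul_of_nonneg_left hAx (sq_nonneg h),
      mul_le_mul_of_nonneg_right hhA (mul_nonneg hh (sq_nonneg ‖x‖)), sq_nonneg (lam * h * ‖x‖)]
  exact le_of_pow_le_pow_left₀ two_ne_zero (by positivity) hsq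

theorem eventually_norm_one_sub_smul_add_smul_le {A : E →L[ℝ] E} {lam : ℝ}
    (hlam : 0 < lam) (hA : ∀ x, lam * ‖x‖ ^ 2 ≤ ⟪A x, x⟫) {h η : ℕ → ℝ} (hh0 : ∀ n, 0 ≤ h n)
    (hh : Tendsto h atTop (𝓝 0)) (hη : ∀ᶠ n in atTop, 0 ≤ η n ∧ η n ≤ lam / 4 * h n) :
    ∀ᶠ n in atTop, ‖1 - h n • A + η n • 1‖ ≤ 1 - lam / 4 * h n := by
  have hhA := hh.mul_const (‖A‖ ^ 2)
  have hlh := hh.const_mul lam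
  rw [zero_mul] at hhA
  rw [mul_zero] at hlh
  filter_upwards [hη, hhA.eventually (eventually_le_nhds hlam),
    hlh.eventually (eventually_le_nhds one_pos)] with n ⟨hη0, hη⟩ hhA hlh
  calc ‖1 - h n • A + η n • 1‖ ≤ ‖1 - h n • A‖ + ‖η n • (1 : E →L[ℝ] E)‖ := norm_add_le _ _
    _ ≤ 1 - lam / 2 * h n + η n :=
      add_le_add (norm_one_sub_smul_le hA (hh0 n) hhA hlh) (norm_smul_one_le hη0)
    _ ≤ 1 - lam / 4 * h n := by linarith

end InnerProductSpace

theorem one_sub_rpow_neg_div_rpow_neg_le {x p : ℝ} (hx : 0 < x) (hp0 : 0 ≤ p) (hp1 : p ≤ 1) :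
    1 - (x + 1) ^ (-p) / x ^ (-p) ≤ (x + 1) ^ (-p) := by
  have hsub : (x + 1) ^ p ≤ x ^ p + 1 := by
    simpa using Real.rpow_add_le_add_rpow hx.le zero_le_one hp0 hp1
  have hx1 : 0 < (x + 1) ^ p := by positivity
  have hxp : 0 < x ^ p := by positivity
  rw [Real.rpow_neg (by positivity), Real.rpow_neg hx.le, div_inv_eq_mul, inv_mul_eq_div,
    sub_le_iff_le_add, inv_eq_one_div, ← add_div, le_div_iff₀ hx1]
  linarith

theorem eventually_le_mul_rpow_neg {η : ℕ → ℝ} {η' θ χ c : ℝ} (hχθ : χ < θ) (hc : 0 < c)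
    (hη : ∀ l : ℕ, 1 ≤ l → 0 ≤ η l ∧ η l ≤ η' * (l : ℝ) ^ (-θ)) :
    ∀ᶠ l : ℕ in atTop, 0 ≤ η l ∧ η l ≤ c * (l : ℝ) ^ (-χ) := by
  have hlim : Tendsto (fun l : ℕ => η' * (l : ℝ) ^ (-(θ - χ))) atTop (𝓝 0) := by
    simpa using ((tendsto_rpow_neg_atTop (sub_pos.2 hχθ)).comp
      tendsto_natCast_atTop_atTop).const_mul η'
  filter_upwards [hlim.eventually (eventually_le_nhds hc), eventually_ge_atTop 1] with l hl hl1
  have hpos : (0 : ℝ) < l := by exact_mod_cast hl1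
  refine ⟨(hη l hl1).1, ?_⟩
  calc η l ≤ η' * (l : ℝ) ^ (-θ) := (hη l hl1).2
    _ = η' * (l : ℝ) ^ (-(θ - χ)) * (l : ℝ) ^ (-χ) := by
      rw [mul_assoc, ← Real.rpow_add hpos]; ring_nf
    _ ≤ c * (l : ℝ) ^ (-χ) := by gcongr

theorem norm_one_sub_rpow_neg_smul_add_smul_sub_smul_le {E : Type*} [NormedAddCommGroup E]
    [NormedSpace ℝ E] (A : E →L[ℝ] E) {χ η : ℝ} (hχ0 : 0 ≤ χ) (hχ1 : χ ≤ 1) (hη : 0 ≤ η)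
    {m : ℕ} (hm : 1 ≤ m) :
    ‖1 - ((m + 1 : ℕ) : ℝ) ^ (-χ) • A + η • 1 - (((m + 1 : ℕ) : ℝ) ^ (-χ) / (m : ℝ) ^ (-χ)) • 1‖
      ≤ (1 + ‖A‖) * ((m + 1 : ℕ) : ℝ) ^ (-χ) + η := by
  have hm' : (0 : ℝ) < m := by exact_mod_cast hm
  have hratio : ((m + 1 : ℕ) : ℝ) ^ (-χ) / (m : ℝ) ^ (-χ) ≤ 1 := div_le_one_of_le₀
    (Real.rpow_le_rpow_of_nonpos hm' (by push_cast; linarith) (by linarith)) (by positivity)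
  refine (norm_one_sub_smul_add_smul_sub_smul_le A (by positivity) hη hratio).trans ?_
  have := one_sub_rpow_neg_div_rpow_neg_le hm' hχ0 hχ1
  push_cast
  linarith

theorem stmt_7_general (d : ℕ) (χ θ η' : ℝ) (hχ : χ ∈ Set.Ioo (0 : ℝ) 1)
    (hθ : θ ∈ Set.Ioc χ 1)
    (η : ℕ → ℝ) (hη : ∀ l : ℕ, 1 ≤ l → 0 ≤ η l ∧ η l ≤ η' * (l : ℝ) ^ (-θ))
    (A : EuclideanSpace ℝ (Fin d) →L[ℝ] EuclideanSpace ℝ (Fin d))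
    (hApos : ∀ x : EuclideanSpace ℝ (Fin d), x ≠ 0 → 0 < ⟪A x, x⟫)
    (z : ℕ → EuclideanSpace ℝ (Fin d))
    (hz : Tendsto (fun n : ℕ => ‖(n : ℝ) ^ (-χ) • ∑ j ∈ Icc 1 n, z j‖) atTop (𝓝 0)) :
    Tendsto (fun n : ℕ =>
        ‖∑ j ∈ Icc 1 (n - 1), (j : ℝ) ^ (-χ) •
          (prodDesc (fun l => 1 - (l : ℝ) ^ (-χ) • A + η l • 1) (j + 1) (n - 1)) (z j)‖)
      atTop (𝓝 0) := by
  obtain ⟨hχ0, hχ1⟩ := hχ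
  obtain ⟨lam, hlam, hA⟩ := exists_pos_mul_norm_sq_le_inner A hApos
  set h : ℕ → ℝ := fun n => (n : ℝ) ^ (-χ)
  set M := fun l : ℕ => 1 - h l • A + η l • 1
  have hh : Tendsto h atTop (𝓝 0) :=
    (tendsto_rpow_neg_atTop hχ0).comp tendsto_natCast_atTop_atTop
  have hη4 := eventually_le_mul_rpow_neg hθ.1 (by positivity : 0 < lam / 4) hη
  have hshift := tendsto_add_atTop_nat 1
  have hh1 : ∀ᶠ m in atTop, lam / 4 * h (m + 1) ≤ 1 := by
    simpa using ((hh.comp hshift).const_mul (lam / 4)).eventually (eventually_le_nhds (by simp))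
  have hdiv : ¬ Summable fun m => h (m + 1) := by
    rw [summable_nat_add_iff 1 (f := h), Real.summable_nat_rpow]
    linarith
  have hM := hshift.eventually
    (eventually_norm_one_sub_smul_add_smul_le hlam hA (fun n => by positivity) hh hη4)
  have hR : ∀ᶠ m in atTop,
      ‖M (m + 1) - (h (m + 1) / h m) • 1‖ ≤ (1 + ‖A‖ + lam / 4) * h (m + 1) := by
    filter_upwards [hshift.eventually hη4, eventually_ge_atTop 1] with m ⟨hη0, hηle⟩ hm
    exact (norm_one_sub_rpow_neg_smul_add_smul_sub_smul_le A hχ0.le hχ1.le hη0 hm).trans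
      (by linarith)
  have hrec := eventually_atTop.2 ⟨1, fun m hm =>
    sum_smul_prodDesc_sub_smul_sum_succ M h z (m := m) (by positivity)⟩
  have hζ := tendsto_zero_iff_norm_tendsto_zero.2 hz
  have hU := tendsto_zero_of_eq_apply_add_apply
    (U := fun m => ∑ j ∈ Icc 1 m, h j • prodDesc M (j + 1) m (z j) - h m • ∑ j ∈ Icc 1 m, z j)
    (by positivity) (fun m => by positivity) hh1 hdiv hζ hM hR hrec
  simpa [h] using ((hU.add hζ).comp (tendsto_sub_atTop_nat 1)).norm

/-- Lemma 2 ii), first part: with `F_{j,n} = j^{-χ} ∏_{l=j+1}^{n−1}(I − l^{-χ}A + η_l I)`,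
if `|n^{-χ} Σ_{j=1}^n z_j| → 0` then `|Σ_{j=1}^{n−1} F_{j,n} z_j| → 0`. -/
theorem stmt_7 (d : ℕ) (hd : 0 < d) (χ θ η' : ℝ) (hχ : χ ∈ Set.Ioo (0 : ℝ) 1)
    (hθ : θ ∈ Set.Ioc χ 1) (hη' : 0 < η')
    (η : ℕ → ℝ) (hη : ∀ l : ℕ, 1 ≤ l → 0 ≤ η l ∧ η l ≤ η' * (l : ℝ) ^ (-θ))
    (A : EuclideanSpace ℝ (Fin d) →L[ℝ] EuclideanSpace ℝ (Fin d))
    (hAsym : ∀ x y : EuclideanSpace ℝ (Fin d), ⟪A x, y⟫ = ⟪x, A y⟫)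
    (hApos : ∀ x : EuclideanSpace ℝ (Fin d), x ≠ 0 → 0 < ⟪A x, x⟫)
    (z : ℕ → EuclideanSpace ℝ (Fin d))
    (hz : Tendsto (fun n : ℕ => ‖(n : ℝ) ^ (-χ) • ∑ j ∈ Icc 1 n, z j‖) atTop (𝓝 0)) :
    Tendsto (fun n : ℕ =>
        ‖∑ j ∈ Icc 1 (n - 1), (j : ℝ) ^ (-χ) •
          (prodDesc (fun l => 1 - (l : ℝ) ^ (-χ) • A + η l • 1) (j + 1) (n - 1)) (z j)‖)
      atTop (𝓝 0) :=
  stmt_7_general d χ θ η' hχ hθ η hη A hApos z hz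
end

section
/- Let χ ∈ (0,1), θ ∈ (χ,1], η̄ > 0, a > 0, and define n_k = ⌊(ak)^{1/(1−χ)}⌋ and I_k = {n_k, …, n_{k+1}−1}. Let A be a symmetric positive-definite real d×d matrix, {Â_l} symmetric positive-semidefinite d×d matrices with ‖n^{-χ} Σ_{l=1}^n (Â_l − A)‖ → 0 as n → ∞, and {η_l} real numbers with 0 ≤ η_l ≤ η̄ l^{-θ}. Then the sequence Σ_{l∈I_k} (l^{-χ}‖Â_l‖ + η_l), k = 0,1,2,…, is bounded. -/
/-!
For a positive semidefinite operator the operator norm is at most the trace, and the trace is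
additive and at most `d` times the norm. Hence on a block `I = [m, M)`
`∑ ‖Â_l‖ ≤ d ‖∑ Â_l‖ ≤ d (‖S M‖ + ‖S m‖ + (M - m) ‖A‖)` with `S n = ∑_{1 ≤ l < n} (Â_l - A) = O(n ^ χ)`.
For `n_k = ⌊(a k) ^ (1 / (1 - χ))⌋` the blocks satisfy `n_{k+1} = O(n_k)` and
`n_{k+1} - n_k = O(n_k ^ χ)`, while the weights `l ^ (-χ)` and `η_l ≤ η̄ l ^ (-θ)` are at most
`n_k ^ (-χ)` on `I_k`; so every block sum is `O(n_k ^ (-χ) n_k ^ χ) = O(1)`.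
-/

open Filter Finset
open scoped RealInnerProductSpace Topology

namespace ContinuousLinearMap

variable {E : Type*} [NormedAddCommGroup E] [InnerProductSpace ℝ E] {T : E →L[ℝ] E}

theorem IsPositive.inner_apply_sq_le (hT : T.IsPositive) (x y : E) :
    ⟪T x, y⟫ ^ 2 ≤ ⟪T x, x⟫ * ⟪T y, y⟫ := by
  have hquad : ∀ t : ℝ, 0 ≤ ⟪T y, y⟫ * (t * t) + 2 * ⟪T x, y⟫ * t + ⟪T x, x⟫ := fun t => by
    have hyx : ⟪T y, x⟫ = ⟪T x, y⟫ := by rw [hT.inner_left_eq_inner_right, real_inner_comm]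
    have h := hT.inner_nonneg_left (x + t • y)
    simp only [map_add, map_smul, inner_add_left, inner_add_right, inner_smul_left,
      inner_smul_right, hyx, RCLike.conj_to_real] at h
    linarith
  have h := discrim_le_zero hquad
  rw [discrim] at h
  linarith

variable [FiniteDimensional ℝ E]

theorem IsPositive.norm_le_trace (hT : T.IsPositive) : ‖T‖ ≤ LinearMap.trace ℝ E T := by
  let b := stdOrthonormalBasis ℝ E
  have htrace : LinearMap.trace ℝ E T = ∑ i, ⟪T (b i), b i⟫ := by
    simp only [LinearMap.trace_eq_sum_inner _ b, coe_coe, real_inner_comm]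
  have htrace_nonneg : 0 ≤ LinearMap.trace ℝ E T :=
    htrace ▸ Finset.sum_nonneg fun i _ => hT.inner_nonneg_left (b i)
  refine opNorm_le_bound _ htrace_nonneg fun x => ?_
  have hsq : ‖T x‖ ^ 2 ≤ ‖T x‖ * (LinearMap.trace ℝ E T * ‖x‖) := calc
    ‖T x‖ ^ 2 = ∑ i, ⟪T x, b i⟫ ^ 2 := (b.sum_sq_inner_left _).symm
    _ ≤ ∑ i, ⟪T x, x⟫ * ⟪T (b i), b i⟫ :=
      Finset.sum_le_sum fun i _ => hT.inner_apply_sq_le x (b i)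
    _ = ⟪T x, x⟫ * LinearMap.trace ℝ E T := by rw [htrace, Finset.mul_sum]
    _ ≤ ‖T x‖ * ‖x‖ * LinearMap.trace ℝ E T :=
      mul_le_mul_of_nonneg_right (real_inner_le_norm _ _) htrace_nonneg
    _ = ‖T x‖ * (LinearMap.trace ℝ E T * ‖x‖) := by ring
  nlinarith [norm_nonneg (T x), mul_nonneg htrace_nonneg (norm_nonneg x)]

theorem trace_le_finrank_mul_norm (T : E →L[ℝ] E) :
    LinearMap.trace ℝ E T ≤ Module.finrank ℝ E * ‖T‖ := by
  let b := stdOrthonormalBasis ℝ E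
  calc LinearMap.trace ℝ E T = ∑ i, ⟪b i, T (b i)⟫ := LinearMap.trace_eq_sum_inner _ b
    _ ≤ ∑ _i, ‖T‖ := Finset.sum_le_sum fun i _ => by
      simpa [b.norm_eq_one] using real_inner_le_norm (b i) (T (b i)) |>.trans
        (mul_le_mul_of_nonneg_left (T.le_opNorm (b i)) (norm_nonneg _))
    _ = Module.finrank ℝ E * ‖T‖ := by simp

theorem sum_norm_le_finrank_mul_norm_sum {ι : Type*} (s : Finset ι) {T : ι → E →L[ℝ] E}
    (hT : ∀ i ∈ s, (T i).IsPositive) :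
    ∑ i ∈ s, ‖T i‖ ≤ Module.finrank ℝ E * ‖∑ i ∈ s, T i‖ := calc
  ∑ i ∈ s, ‖T i‖ ≤ ∑ i ∈ s, LinearMap.trace ℝ E (T i) :=
      Finset.sum_le_sum fun i hi => (hT i hi).norm_le_trace
  _ = LinearMap.trace ℝ E ↑(∑ i ∈ s, T i) := by rw [toLinearMap_sum, map_sum]
  _ ≤ Module.finrank ℝ E * ‖∑ i ∈ s, T i‖ := trace_le_finrank_mul_norm _

end ContinuousLinearMap

section PartialSums

variable {F : Type*} [NormedAddCommGroup F] [NormedSpace ℝ F] {f : ℕ → F} {χ C : ℝ}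

theorem norm_sum_Ico_one_le_of_norm_rpow_smul_le (hχ : 0 ≤ χ)
    (h : ∀ n : ℕ, ‖(n : ℝ) ^ (-χ) • ∑ l ∈ Icc 1 n, f l‖ ≤ C) (n : ℕ) :
    ‖∑ l ∈ Ico 1 n, f l‖ ≤ C * (n : ℝ) ^ χ := by
  have hC : 0 ≤ C := (norm_nonneg _).trans (h 0)
  rcases n with _ | k
  · simpa using mul_nonneg hC (Real.rpow_nonneg le_rfl χ)
  rw [Finset.Ico_add_one_right_eq_Icc]
  rcases Nat.eq_zero_or_pos k with rfl | hk
  · simpa using hC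
  have hk' : (0 : ℝ) < k := Nat.cast_pos.mpr hk
  calc ‖∑ l ∈ Icc 1 k, f l‖ = (k : ℝ) ^ χ * ‖(k : ℝ) ^ (-χ) • ∑ l ∈ Icc 1 k, f l‖ := by
        rw [norm_smul, Real.norm_of_nonneg (by positivity), ← mul_assoc,
          ← Real.rpow_add hk', add_neg_cancel, Real.rpow_zero, one_mul]
    _ ≤ (k : ℝ) ^ χ * C := by gcongr; exact h k
    _ ≤ C * ((k + 1 : ℕ) : ℝ) ^ χ := by
        rw [mul_comm]; gcongr; exact_mod_cast k.le_succ

theorem norm_sum_Ico_le (A : F) {m M : ℕ} (hm : 1 ≤ m) (hmM : m ≤ M)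
    (h : ∀ n : ℕ, ‖∑ l ∈ Ico 1 n, (f l - A)‖ ≤ C * (n : ℝ) ^ χ) :
    ‖∑ l ∈ Ico m M, f l‖ ≤ C * ((M : ℝ) ^ χ + (m : ℝ) ^ χ) + ((M : ℝ) - m) * ‖A‖ := by
  have hsplit : ∑ l ∈ Ico m M, f l
      = (∑ l ∈ Ico 1 M, (f l - A) - ∑ l ∈ Ico 1 m, (f l - A)) + (M - m) • A := by
    rw [← Finset.sum_Ico_consecutive _ hm hmM, Finset.sum_sub_distrib (s := Ico m M),
      Finset.sum_const, Nat.card_Ico]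
    abel
  calc ‖∑ l ∈ Ico m M, f l‖
      ≤ ‖∑ l ∈ Ico 1 M, (f l - A)‖ + ‖∑ l ∈ Ico 1 m, (f l - A)‖ + ‖(M - m) • A‖ := by
        rw [hsplit]; exact (norm_add_le _ _).trans (by gcongr; exact norm_sub_le _ _)
    _ ≤ C * (M : ℝ) ^ χ + C * (m : ℝ) ^ χ + ((M : ℝ) - m) * ‖A‖ := by
        rw [RCLike.norm_nsmul ℝ, nsmul_eq_mul, Nat.cast_sub hmM]
        gcongr <;> apply h
    _ = _ := by ring

end PartialSums

theorem rpow_sub_rpow_le_mul {e x y : ℝ} (he : 1 ≤ e) (hy : 0 ≤ y) (hyx : y ≤ x) :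
    x ^ e - y ^ e ≤ e * x ^ (e - 1) * (x - y) := by
  rcases hyx.eq_or_lt with rfl | hlt
  · simp
  have hx : 0 < x := hy.trans_lt hlt
  have hbern := one_add_mul_self_le_rpow_one_add
    (show -1 ≤ y / x - 1 by have := div_nonneg hy hx.le; linarith) he
  rw [add_sub_cancel, Real.div_rpow hy hx.le, le_div_iff₀ (by positivity)] at hbern
  rw [Real.rpow_sub_one hx.ne']
  have : x ^ e * (1 + e * (y / x - 1)) = x ^ e - e * (x ^ e / x) * (x - y) := by
    field_simp; ring
  linarith

theorem rpow_le_mul_floor_rpow {e u v : ℝ} (he : 0 ≤ e) (hu : 1 ≤ u) (hv0 : 0 ≤ v)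
    (hv : v ≤ 2 * u) : v ^ e ≤ 2 * 2 ^ e * ⌊u ^ e⌋₊ := by
  have hue : 1 ≤ u ^ e := Real.one_le_rpow hu he
  have hfloor : (1 : ℝ) ≤ ⌊u ^ e⌋₊ := by exact_mod_cast Nat.one_le_floor_iff _ |>.mpr hue
  calc v ^ e ≤ (2 * u) ^ e := by gcongr
    _ = 2 ^ e * u ^ e := Real.mul_rpow zero_le_two (by positivity)
    _ ≤ 2 ^ e * (2 * ⌊u ^ e⌋₊) := by gcongr; linarith [Nat.lt_floor_add_one (u ^ e)]
    _ = 2 * 2 ^ e * ⌊u ^ e⌋₊ := by ring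

noncomputable def blockStart (a χ : ℝ) (k : ℕ) : ℕ := ⌊(a * k) ^ (1 / (1 - χ))⌋₊

theorem eventually_blockStart_bounds {a χ : ℝ} (ha : 0 < a) (hχ0 : 0 < χ) (hχ1 : χ < 1) :
    ∃ c : ℝ, ∀ᶠ k in atTop, 1 ≤ blockStart a χ k ∧ blockStart a χ k ≤ blockStart a χ (k + 1) ∧
      (blockStart a χ (k + 1) : ℝ) ^ χ ≤ c * (blockStart a χ k : ℝ) ^ χ ∧
      (blockStart a χ (k + 1) : ℝ) - blockStart a χ k ≤ c * (blockStart a χ k : ℝ) ^ χ := by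
  simp only [blockStart, Nat.cast_add, Nat.cast_one]
  set e := 1 / (1 - χ) with he_def
  have h1χ : 0 < 1 - χ := by linarith
  have he : 1 ≤ e := by rw [he_def, le_div_iff₀ h1χ]; linarith
  have heχ : e - 1 = e * χ := by rw [he_def]; field_simp; ring
  set q : ℝ := 2 * 2 ^ e
  refine ⟨(a * e + 1) * q ^ χ, ?_⟩
  filter_upwards [eventually_ge_atTop 1, eventually_ge_atTop ⌈a⁻¹⌉₊] with k hk1 hka
  have hk : (1 : ℝ) ≤ k := by exact_mod_cast hk1
  have hak : 1 ≤ a * k := by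
    rw [← mul_inv_cancel₀ ha.ne']
    exact mul_le_mul_of_nonneg_left (Nat.ceil_le.mp hka) ha.le
  set m := ⌊(a * k) ^ e⌋₊
  set M := ⌊(a * (k + 1)) ^ e⌋₊
  have hm : 1 ≤ m := Nat.one_le_floor_iff _ |>.mpr (Real.one_le_rpow hak (by linarith))
  have hgM : (a * (k + 1)) ^ e ≤ q * m :=
    rpow_le_mul_floor_rpow (by linarith) hak (by positivity) (by nlinarith)
  have hmχ : 1 ≤ q ^ χ * (m : ℝ) ^ χ := one_le_mul_of_one_le_of_one_le
    (Real.one_le_rpow (by nlinarith [Real.one_le_rpow one_le_two (by linarith : 0 ≤ e)]) hχ0.le)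
    (Real.one_le_rpow (by exact_mod_cast hm) hχ0.le)
  have hMχ : (M : ℝ) ^ χ ≤ q ^ χ * (m : ℝ) ^ χ := by
    rw [← Real.mul_rpow (by positivity) (by positivity)]
    gcongr
    exact (Nat.floor_le (by positivity)).trans hgM
  -- `g t = (a t) ^ e` is convex with `g' = a e g ^ χ`, so `g (k + 1) - g k ≤ g' (k + 1)`
  have hdiff : (M : ℝ) - m ≤ a * e * (q ^ χ * (m : ℝ) ^ χ) + 1 := calc
    (M : ℝ) - m ≤ (a * (k + 1)) ^ e - (a * k) ^ e + 1 := by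
      linarith [Nat.floor_le (by positivity : 0 ≤ (a * (k + 1)) ^ e),
        Nat.lt_floor_add_one ((a * k) ^ e)]
    _ ≤ e * (a * (k + 1)) ^ (e - 1) * (a * (k + 1) - a * k) + 1 := by
      gcongr; exact rpow_sub_rpow_le_mul he (by positivity) (by gcongr; linarith)
    _ = a * e * ((a * (k + 1)) ^ e) ^ χ + 1 := by
      rw [heχ, Real.rpow_mul (by positivity)]; ring
    _ ≤ a * e * (q ^ χ * (m : ℝ) ^ χ) + 1 := by
      rw [← Real.mul_rpow (by positivity) (by positivity)]; gcongr
  have hae : 0 ≤ a * e * (q ^ χ * (m : ℝ) ^ χ) := by positivity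
  exact ⟨hm, Nat.floor_le_floor (by gcongr; linarith), by linarith, by linarith⟩

theorem sum_Ico_rpow_mul_add_le {χ θ η' : ℝ} {w η : ℕ → ℝ} {m M : ℕ} (hm : 1 ≤ m)
    (hmM : m ≤ M) (hχ : 0 ≤ χ) (hχθ : χ ≤ θ) (hη' : 0 ≤ η') (hw : ∀ l, 0 ≤ w l)
    (hη : ∀ l : ℕ, 1 ≤ l → η l ≤ η' * (l : ℝ) ^ (-θ)) :
    ∑ l ∈ Ico m M, ((l : ℝ) ^ (-χ) * w l + η l)
      ≤ (m : ℝ) ^ (-χ) * (∑ l ∈ Ico m M, w l + ((M : ℝ) - m) * η') := by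
  have hm' : (0 : ℝ) < m := by exact_mod_cast hm
  have hterm : ∀ l ∈ Ico m M, (l : ℝ) ^ (-χ) * w l + η l ≤ (m : ℝ) ^ (-χ) * (w l + η') := by
    intro l hl
    have hml : (m : ℝ) ≤ l := by exact_mod_cast (mem_Ico.mp hl).1
    have hl1 : 1 ≤ l := hm.trans (mem_Ico.mp hl).1
    have hdecay : (l : ℝ) ^ (-χ) ≤ (m : ℝ) ^ (-χ) :=
      Real.rpow_le_rpow_of_nonpos hm' hml (by linarith)
    have hη_le : η l ≤ η' * (m : ℝ) ^ (-χ) := calc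
      η l ≤ η' * (l : ℝ) ^ (-θ) := hη l hl1
      _ ≤ η' * (l : ℝ) ^ (-χ) := by
        gcongr
        exact_mod_cast hl1
      _ ≤ η' * (m : ℝ) ^ (-χ) := by gcongr
    nlinarith [hw l]
  calc ∑ l ∈ Ico m M, ((l : ℝ) ^ (-χ) * w l + η l)
      ≤ ∑ l ∈ Ico m M, (m : ℝ) ^ (-χ) * (w l + η') := sum_le_sum hterm
    _ = (m : ℝ) ^ (-χ) * (∑ l ∈ Ico m M, w l + ((M : ℝ) - m) * η') := by
      rw [← mul_sum, sum_add_distrib, sum_const, Nat.card_Ico, nsmul_eq_mul, Nat.cast_sub hmM]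

theorem stmt_10_general (d : ℕ) (χ θ η' a : ℝ) (hχ : χ ∈ Set.Ioo (0 : ℝ) 1)
    (hθ : θ ∈ Set.Ioc χ 1) (hη' : 0 < η') (ha : 0 < a)
    (A : EuclideanSpace ℝ (Fin d) →L[ℝ] EuclideanSpace ℝ (Fin d))
    (Ah : ℕ → EuclideanSpace ℝ (Fin d) →L[ℝ] EuclideanSpace ℝ (Fin d))
    (hAhsym : ∀ (l : ℕ) (x y : EuclideanSpace ℝ (Fin d)), ⟪Ah l x, y⟫ = ⟪x, Ah l y⟫)
    (hAhpsd : ∀ (l : ℕ) (x : EuclideanSpace ℝ (Fin d)), 0 ≤ ⟪Ah l x, x⟫)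
    (hcoefA : Tendsto (fun n : ℕ => ‖(n : ℝ) ^ (-χ) • ∑ l ∈ Icc 1 n, (Ah l - A)‖)
      atTop (𝓝 0))
    (η : ℕ → ℝ) (hη : ∀ l : ℕ, 1 ≤ l → 0 ≤ η l ∧ η l ≤ η' * (l : ℝ) ^ (-θ)) :
    ∃ K : ℝ, ∀ k : ℕ,
      ∑ l ∈ Ico (⌊(a * k) ^ (1 / (1 - χ))⌋₊) (⌊(a * (k + 1)) ^ (1 / (1 - χ))⌋₊),
        ((l : ℝ) ^ (-χ) * ‖Ah l‖ + η l) ≤ K := by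
  obtain ⟨hχ0, hχ1⟩ := hχ
  have hpos (l : ℕ) : (Ah l).IsPositive :=
    (ContinuousLinearMap.isPositive_iff _).mpr ⟨hAhsym l, hAhpsd l⟩
  obtain ⟨C, hC⟩ := hcoefA.bddAbove_range
  have hC0 : 0 ≤ C := (norm_nonneg _).trans (hC ⟨0, rfl⟩)
  have hpartial := norm_sum_Ico_one_le_of_norm_rpow_smul_le hχ0.le fun n => hC ⟨n, rfl⟩
  obtain ⟨c, hc⟩ := eventually_blockStart_bounds ha hχ0 hχ1
  suffices h : ∀ᶠ k in atTop, ∑ l ∈ Ico (blockStart a χ k) (blockStart a χ (k + 1)),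
      ((l : ℝ) ^ (-χ) * ‖Ah l‖ + η l) ≤ d * C * (c + 1) + c * (d * ‖A‖ + η') by
    obtain ⟨K, hK⟩ := (isBoundedUnder_of_eventually_le h).bddAbove_range
    exact ⟨K, fun k => by simpa [blockStart] using hK ⟨k, rfl⟩⟩
  filter_upwards [hc] with k ⟨hm, hmM, hMχ, hdiff⟩
  set m := blockStart a χ k
  set M := blockStart a χ (k + 1)
  have hnorms : ∑ l ∈ Ico m M, ‖Ah l‖ ≤ d * (C * ((M : ℝ) ^ χ + (m : ℝ) ^ χ) + (M - m) * ‖A‖) :=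
    calc ∑ l ∈ Ico m M, ‖Ah l‖ ≤ d * ‖∑ l ∈ Ico m M, Ah l‖ := by
          simpa using ContinuousLinearMap.sum_norm_le_finrank_mul_norm_sum _ fun l _ => hpos l
      _ ≤ _ := by gcongr; exact norm_sum_Ico_le A hm hmM hpartial
  calc _ ≤ (m : ℝ) ^ (-χ) * (∑ l ∈ Ico m M, ‖Ah l‖ + ((M : ℝ) - m) * η') :=
        sum_Ico_rpow_mul_add_le hm hmM hχ0.le hθ.1.le hη'.le (fun _ => norm_nonneg _)
          fun l hl => (hη l hl).2
    _ ≤ (m : ℝ) ^ (-χ) * ((d * C * (c + 1) + c * (d * ‖A‖ + η')) * (m : ℝ) ^ χ) := by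
        gcongr
        nlinarith [mul_le_mul_of_nonneg_left hMχ (by positivity : (0 : ℝ) ≤ d * C),
          mul_le_mul_of_nonneg_left hdiff (by positivity : (0 : ℝ) ≤ d * ‖A‖ + η')]
    _ = _ := by rw [Real.rpow_neg (by positivity)]; field_simp

/-- Lemma 2 iv): with blocks `I_k = {n_k, …, n_{k+1}−1}`, `n_k = ⌊(ak)^{1/(1−χ)}⌋`,
the sequence `Σ_{l∈I_k} (l^{-χ}‖Â_l‖ + η_l)` is bounded. -/
theorem stmt_10 (d : ℕ) (hd : 0 < d) (χ θ η' a : ℝ) (hχ : χ ∈ Set.Ioo (0 : ℝ) 1)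
    (hθ : θ ∈ Set.Ioc χ 1) (hη' : 0 < η') (ha : 0 < a)
    (A : EuclideanSpace ℝ (Fin d) →L[ℝ] EuclideanSpace ℝ (Fin d))
    (hAsym : ∀ x y : EuclideanSpace ℝ (Fin d), ⟪A x, y⟫ = ⟪x, A y⟫)
    (hApos : ∀ x : EuclideanSpace ℝ (Fin d), x ≠ 0 → 0 < ⟪A x, x⟫)
    (Ah : ℕ → EuclideanSpace ℝ (Fin d) →L[ℝ] EuclideanSpace ℝ (Fin d))
    (hAhsym : ∀ (l : ℕ) (x y : EuclideanSpace ℝ (Fin d)), ⟪Ah l x, y⟫ = ⟪x, Ah l y⟫)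
    (hAhpsd : ∀ (l : ℕ) (x : EuclideanSpace ℝ (Fin d)), 0 ≤ ⟪Ah l x, x⟫)
    (hcoefA : Tendsto (fun n : ℕ => ‖(n : ℝ) ^ (-χ) • ∑ l ∈ Icc 1 n, (Ah l - A)‖)
      atTop (𝓝 0))
    (η : ℕ → ℝ) (hη : ∀ l : ℕ, 1 ≤ l → 0 ≤ η l ∧ η l ≤ η' * (l : ℝ) ^ (-θ)) :
    ∃ K : ℝ, ∀ k : ℕ,
      ∑ l ∈ Ico (⌊(a * k) ^ (1 / (1 - χ))⌋₊) (⌊(a * (k + 1)) ^ (1 / (1 - χ))⌋₊),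
        ((l : ℝ) ^ (-χ) * ‖Ah l‖ + η l) ≤ K :=
  stmt_10_general d χ θ η' a hχ hθ hη' ha A Ah hAhsym hAhpsd hcoefA η hη
end
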